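/- arXiv:2102.10933 — 4 statements merged into one kernel-verified Lean document; each statement's English description precedes it below -/
import Mathlib

section
/- Assume ω > 0, ε ≥ 0, β ≠ 0 and β·(α(ω+ε) − ωε) ≤ 0. Then the origin (0,0,0,0) is the unique equilibrium of the Hamiltonian vector field F, i.e. the zero set of F equals {(0,0,0,0)}. -/
/-!
At an equilibrium the momenta vanish and `(ω + ε) y = ε x`; eliminating `y` leaves
`c x = b x³` with `b = β (ω + ε)` and `c = α (ω + ε) − ω ε`. Multiplying by `b x` gives
`b² x⁴ = b c x² ≤ 0`, so `x = 0`, and then `y = 0` because `ω + ε > 0`.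
-/

/-- The Hamiltonian vector field of
`H(x,y,p_x,p_y) = (p_x² + p_y²)/2 − (α/2)x² + (β/4)x⁴ + (ω/2)y² + (ε/2)(x−y)²`,
`F(x,y,p_x,p_y) = (p_x, p_y, αx − βx³ + ε(y−x), −ωy + ε(x−y))`. -/
noncomputable def F (α β ω ε : ℝ) (p : ℝ × ℝ × ℝ × ℝ) : ℝ × ℝ × ℝ × ℝ :=
  (p.2.2.1, p.2.2.2,
   α * p.1 - β * p.1 ^ 3 + ε * (p.2.1 - p.1),
   -ω * p.2.1 + ε * (p.1 - p.2.1))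

theorem eq_zero_of_mul_eq_mul_pow_three {K : Type*} [Field K] [LinearOrder K]
    [IsStrictOrderedRing K] {b c x : K} (hb : b ≠ 0) (hbc : b * c ≤ 0)
    (h : c * x = b * x ^ 3) : x = 0 := by
  have hquartic : b ^ 2 * x ^ 4 = b * c * x ^ 2 := by linear_combination -b * x * h
  have hnonpos : b ^ 2 * x ^ 4 ≤ 0 := hquartic ▸ mul_nonpos_of_nonpos_of_nonneg hbc (sq_nonneg x)
  have hzero : b ^ 2 * x ^ 4 = 0 := le_antisymm hnonpos (by positivity)
  simpa [hb] using hzero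

theorem cubic_of_F_eq_zero {α β ω ε x y px py : ℝ} (hF : F α β ω ε (x, y, px, py) = (0, 0, 0, 0)) :
    px = 0 ∧ py = 0 ∧ (ω + ε) * y = ε * x ∧
      (α * (ω + ε) - ω * ε) * x = β * (ω + ε) * x ^ 3 := by
  simp only [F, Prod.mk.injEq] at hF
  obtain ⟨hpx, hpy, hx, hy⟩ := hF
  exact ⟨hpx, hpy, by linear_combination -hy, by linear_combination (ω + ε) * hx + ε * hy⟩

theorem zero_set_eq_origin (α β ω ε : ℝ)
    (hω : 0 < ω) (hε : 0 ≤ ε) (hβ : β ≠ 0)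
    (h : β * (α * (ω + ε) - ω * ε) ≤ 0) :
    {p : ℝ × ℝ × ℝ × ℝ | F α β ω ε p = (0, 0, 0, 0)} =
      {((0 : ℝ), (0 : ℝ), (0 : ℝ), (0 : ℝ))} := by
  have hωε : 0 < ω + ε := by positivity
  ext ⟨x, y, px, py⟩
  simp only [Set.mem_ofPred_eq, Set.mem_singleton_iff]
  constructor
  · intro hF
    obtain ⟨rfl, rfl, hcoupling, hcubic⟩ := cubic_of_F_eq_zero hF
    have hx : x = 0 := eq_zero_of_mul_eq_mul_pow_three (c := α * (ω + ε) - ω * ε)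
      (mul_ne_zero hβ hωε.ne') (by linear_combination (ω + ε) * h) hcubic
    subst hx
    have hy : y = 0 := by simpa [hωε.ne'] using hcoupling
    rw [hy]
  · rintro ⟨⟩
    simp [F]
end

section
/- Assume ω > 0, ε ≥ 0, and α(ω+ε) > ωε. Then the Jacobian of the Hamiltonian vector field F at the origin has exactly two nonzero real eigenvalues, namely ±√λ₁, and two purely imaginary eigenvalues, namely ±i√(−λ₂), where λ₁ = ((α − ω − 2ε) + √((α+ω)² + 4ε²))/2 > 0 and λ₂ = ((α − ω − 2ε) − √((α+ω)² + 4ε²))/2 < 0; that is, the origin is a saddle-centre equilibrium. -/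
/-!
The characteristic polynomial of the Jacobian is the biquadratic
`μ⁴ - (α - ω - 2ε) μ² + (ωε - α(ω + ε))`, i.e. `(μ² - λ₁)(μ² - λ₂)` with `λ₁, λ₂`
the roots of the quadratic in `μ²` (Vieta). The hypothesis `α(ω + ε) > ωε` says exactly
that `λ₁ λ₂ < 0`, and since `λ₂ ≤ λ₁` this forces `λ₂ < 0 < λ₁`; the eigenvalues are
then the square roots `±√λ₁` and `±i√(-λ₂)`.
-/

/-- Jacobian of the Hamiltonian vector field
`F(x,y,p_x,p_y) = (p_x, p_y, αx − βx³ + ε(y−x), −ωy + ε(x−y))`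
at the origin. -/
noncomputable def JacOrigin (α ω ε : ℝ) : Matrix (Fin 4) (Fin 4) ℝ :=
  !![0, 0, 1, 0;
     0, 0, 0, 1;
     α - ε, ε, 0, 0;
     ε, -ω - ε, 0, 0]

open Complex

lemma det_smul_one_sub_jacOrigin (α ω ε : ℝ) (μ : ℂ) :
    (μ • (1 : Matrix (Fin 4) (Fin 4) ℂ) - (JacOrigin α ω ε).map ofReal).det
      = μ ^ 4 - (α - ω - 2 * ε) * μ ^ 2 + (ω * ε - α * (ω + ε)) := by
  have hsuccAbove : (2 : Fin 4).succAbove (2 : Fin 3) = 3 := by decide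
  have hmat : μ • (1 : Matrix (Fin 4) (Fin 4) ℂ) - (JacOrigin α ω ε).map ofReal
      = !![μ, 0, -1, 0;
           0, μ, 0, -1;
           -(α - ε : ℝ), -(ε : ℝ), μ, 0;
           -(ε : ℝ), -(-ω - ε : ℝ), 0, μ] := by
    ext i j
    fin_cases i <;> fin_cases j <;> simp [JacOrigin]
  rw [hmat]
  simp [Matrix.det_succ_row_zero, Fin.sum_univ_succ, hsuccAbove]
  ring

lemma mem_spectrum_jacOrigin_iff (α ω ε : ℝ) (μ : ℂ) :
    μ ∈ spectrum ℂ ((JacOrigin α ω ε).map ofReal) ↔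
      μ ^ 4 - (α - ω - 2 * ε) * μ ^ 2 + (ω * ε - α * (ω + ε)) = 0 := by
  rw [spectrum.mem_iff, Matrix.isUnit_iff_isUnit_det, isUnit_iff_ne_zero, not_ne_iff,
    Algebra.algebraMap_eq_smul_one, det_smul_one_sub_jacOrigin]

lemma sq_eq_ofReal_iff_of_nonneg {l : ℝ} (hl : 0 ≤ l) {μ : ℂ} :
    μ ^ 2 = l ↔ μ = √l ∨ μ = -√l := by
  rw [← sq_eq_sq_iff_eq_or_eq_neg, ← ofReal_pow, Real.sq_sqrt hl]

lemma sq_eq_ofReal_iff_of_nonpos {l : ℝ} (hl : l ≤ 0) {μ : ℂ} :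
    μ ^ 2 = l ↔ μ = I * √(-l) ∨ μ = -(I * √(-l)) := by
  rw [← sq_eq_sq_iff_eq_or_eq_neg, mul_pow, I_sq, ← ofReal_pow, Real.sq_sqrt (neg_nonneg.2 hl)]
  push_cast
  ring_nf

lemma mul_quadratic_roots {s d : ℝ} (hd : 0 ≤ d) :
    (s + √d) / 2 * ((s - √d) / 2) = (s ^ 2 - d) / 4 := by
  linear_combination (-1 / 4 : ℝ) * Real.sq_sqrt hd

theorem origin_saddle_centre_general (α ω ε : ℝ)
    (h : ω * ε < α * (ω + ε)) (l1 l2 : ℝ)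
    (hl1 : l1 = ((α - ω - 2 * ε) + Real.sqrt ((α + ω) ^ 2 + 4 * ε ^ 2)) / 2)
    (hl2 : l2 = ((α - ω - 2 * ε) - Real.sqrt ((α + ω) ^ 2 + 4 * ε ^ 2)) / 2) :
    0 < l1 ∧ l2 < 0 ∧
    spectrum ℂ ((JacOrigin α ω ε).map (Complex.ofReal)) =
      {(Real.sqrt l1 : ℂ), -(Real.sqrt l1 : ℂ),
       Complex.I * (Real.sqrt (-l2) : ℂ), -(Complex.I * (Real.sqrt (-l2) : ℂ))} := by
  have hsum : l1 + l2 = α - ω - 2 * ε := by rw [hl1, hl2]; ring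
  have hprod : l1 * l2 = ω * ε - α * (ω + ε) := by
    rw [hl1, hl2, mul_quadratic_roots (by positivity)]; ring
  have hl21 : l2 ≤ l1 := by
    rw [hl1, hl2]; linarith [Real.sqrt_nonneg ((α + ω) ^ 2 + 4 * ε ^ 2)]
  obtain ⟨hl1_pos, hl2_neg⟩ : 0 < l1 ∧ l2 < 0 :=
    (mul_neg_iff.1 (by linarith)).resolve_right fun h' => by linarith [h'.1, h'.2]
  refine ⟨hl1_pos, hl2_neg, Set.ext fun μ => ?_⟩
  have hfactor : μ ^ 4 - (α - ω - 2 * ε) * μ ^ 2 + (ω * ε - α * (ω + ε))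
      = (μ ^ 2 - l1) * (μ ^ 2 - l2) := by
    have hsumC : (l1 + l2 : ℂ) = α - ω - 2 * ε := by exact_mod_cast hsum
    have hprodC : (l1 * l2 : ℂ) = ω * ε - α * (ω + ε) := by exact_mod_cast hprod
    linear_combination μ ^ 2 * hsumC - hprodC
  rw [mem_spectrum_jacOrigin_iff, hfactor, mul_eq_zero, sub_eq_zero, sub_eq_zero,
    sq_eq_ofReal_iff_of_nonneg hl1_pos.le, sq_eq_ofReal_iff_of_nonpos hl2_neg.le]
  simp only [Set.mem_insert_iff, Set.mem_singleton_iff, or_assoc]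

theorem origin_saddle_centre (α ω ε : ℝ) (hω : 0 < ω) (hε : 0 ≤ ε)
    (h : ω * ε < α * (ω + ε)) (l1 l2 : ℝ)
    (hl1 : l1 = ((α - ω - 2 * ε) + Real.sqrt ((α + ω) ^ 2 + 4 * ε ^ 2)) / 2)
    (hl2 : l2 = ((α - ω - 2 * ε) - Real.sqrt ((α + ω) ^ 2 + 4 * ε ^ 2)) / 2) :
    0 < l1 ∧ l2 < 0 ∧
    spectrum ℂ ((JacOrigin α ω ε).map (Complex.ofReal)) =
      {(Real.sqrt l1 : ℂ), -(Real.sqrt l1 : ℂ),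
       Complex.I * (Real.sqrt (-l2) : ℂ), -(Complex.I * (Real.sqrt (-l2) : ℂ))} :=
  origin_saddle_centre_general α ω ε h l1 l2 hl1 hl2
end

section
/- Assume ω > 0, ε ≥ 0, β ≠ 0 and β·(α(ω+ε) − ωε) > 0, and set x^e = √((α − ωε/(ω+ε))/β), y^e = (ε/(ω+ε))·x^e. Then the characteristic polynomial of the Jacobian of the Hamiltonian vector field F evaluated at (±x^e, ±y^e, 0, 0) factors as (t² − λ₃)(t² − λ₄), where λ₃ = (−2α − (ω² + 2ε²)/(ω+ε) + √((2α − ω − 3ωε/(ω+ε))² + 4ε²))/2 and λ₄ = (−2α − (ω² + 2ε²)/(ω+ε) − √((2α − ω − 3ωε/(ω+ε))² + 4ε²))/2. -/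
open Polynomial

/-- Jacobian of the Hamiltonian vector field
`F(x,y,p_x,p_y) = (p_x, p_y, αx − βx³ + ε(y−x), −ωy + ε(x−y))`
at a point with first coordinate `x`. -/
noncomputable def Jac (α β ω ε x : ℝ) : Matrix (Fin 4) (Fin 4) ℝ :=
  !![0, 0, 1, 0;
     0, 0, 0, 1;
     α - ε - 3 * β * x ^ 2, ε, 0, 0;
     ε, -ω - ε, 0, 0]

/-! At an equilibrium `β x² = α − ωε/(ω+ε)`, the Jacobian has the block form `[[0, I], [S, 0]]`
with `S` symmetric, so its characteristic polynomial is `det (X² − S)`, a quadratic in `X²`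
whose roots are the eigenvalues of `S`. -/

theorem charpoly_hamiltonian_block (a d e : ℝ) :
    (!![0, 0, 1, 0; 0, 0, 0, 1; a, e, 0, 0; e, d, 0, 0] : Matrix (Fin 4) (Fin 4) ℝ).charpoly
      = X ^ 4 - C (a + d) * X ^ 2 + C (a * d - e ^ 2) := by
  rw [Matrix.charpoly]
  simp [Matrix.det_succ_row_zero, Matrix.charmatrix_apply, Fin.sum_univ_succ,
    Matrix.diagonal_apply, Fin.succAbove]
  ring

theorem X_pow_four_sub_C_mul_X_sq_add_C_eq_mul (a d e : ℝ) :
    (X ^ 4 - C (a + d) * X ^ 2 + C (a * d - e ^ 2) : ℝ[X]) =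
      (X ^ 2 - C ((a + d + √((a - d) ^ 2 + 4 * e ^ 2)) / 2)) *
        (X ^ 2 - C ((a + d - √((a - d) ^ 2 + 4 * e ^ 2)) / 2)) := by
  set r := √((a - d) ^ 2 + 4 * e ^ 2)
  have hr : r ^ 2 = (a - d) ^ 2 + 4 * e ^ 2 := Real.sq_sqrt (by positivity)
  have hsum : C (a + d) = C ((a + d + r) / 2) + C ((a + d - r) / 2) := by
    rw [← C_add]
    congr 1
    ring
  have hprod : a * d - e ^ 2 = (a + d + r) / 2 * ((a + d - r) / 2) := by
    linear_combination (1 / 4 : ℝ) * hr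
  rw [hsum, hprod, C_mul]
  ring

theorem Jac_eq_of_mul_sq_eq {α β ω ε x c : ℝ} (h : β * x ^ 2 = c) :
    Jac α β ω ε x = !![0, 0, 1, 0; 0, 0, 0, 1; α - ε - 3 * c, ε, 0, 0; ε, -ω - ε, 0, 0] := by
  rw [Jac, ← h, mul_assoc]

theorem charpoly_at_nontrivial_equilibria_general (α β ω ε : ℝ)
    (hω : 0 < ω) (hε : 0 ≤ ε) (hβ : β ≠ 0)
    (h : 0 < β * (α * (ω + ε) - ω * ε))
    (xe : ℝ)
    (hxe : xe = Real.sqrt ((α - ω * ε / (ω + ε)) / β))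
    (l3 l4 : ℝ)
    (hl3 : l3 = (-2 * α - (ω ^ 2 + 2 * ε ^ 2) / (ω + ε)
        + Real.sqrt ((2 * α - ω - 3 * ω * ε / (ω + ε)) ^ 2 + 4 * ε ^ 2)) / 2)
    (hl4 : l4 = (-2 * α - (ω ^ 2 + 2 * ε ^ 2) / (ω + ε)
        - Real.sqrt ((2 * α - ω - 3 * ω * ε / (ω + ε)) ^ 2 + 4 * ε ^ 2)) / 2) :
    (Jac α β ω ε xe).charpoly = (X ^ 2 - C l3) * (X ^ 2 - C l4) ∧
    (Jac α β ω ε (-xe)).charpoly = (X ^ 2 - C l3) * (X ^ 2 - C l4) := by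
  have hωε : 0 < ω + ε := by linarith
  have harg : 0 ≤ (α - ω * ε / (ω + ε)) / β := by
    have : (α - ω * ε / (ω + ε)) / β = β * (α * (ω + ε) - ω * ε) / ((ω + ε) * β ^ 2) := by
      field_simp
    rw [this]
    positivity
  have hxe2 : β * xe ^ 2 = α - ω * ε / (ω + ε) := by
    rw [hxe, Real.sq_sqrt harg, mul_div_cancel₀ _ hβ]
  have htrace : α - ε - 3 * (α - ω * ε / (ω + ε)) + (-ω - ε)
      = -2 * α - (ω ^ 2 + 2 * ε ^ 2) / (ω + ε) := by
    field_simp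
    ring
  have hdiff : (α - ε - 3 * (α - ω * ε / (ω + ε)) - (-ω - ε)) ^ 2
      = (2 * α - ω - 3 * ω * ε / (ω + ε)) ^ 2 := by
    ring
  have key : ∀ x, β * x ^ 2 = α - ω * ε / (ω + ε) →
      (Jac α β ω ε x).charpoly = (X ^ 2 - C l3) * (X ^ 2 - C l4) := by
    intro x hx
    rw [Jac_eq_of_mul_sq_eq hx, charpoly_hamiltonian_block, X_pow_four_sub_C_mul_X_sq_add_C_eq_mul, htrace,
      hdiff, hl3, hl4]
  exact ⟨key xe hxe2, key (-xe) (by rwa [neg_sq])⟩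

theorem charpoly_at_nontrivial_equilibria (α β ω ε : ℝ)
    (hω : 0 < ω) (hε : 0 ≤ ε) (hβ : β ≠ 0)
    (h : 0 < β * (α * (ω + ε) - ω * ε))
    (xe ye : ℝ)
    (hxe : xe = Real.sqrt ((α - ω * ε / (ω + ε)) / β))
    (hye : ye = ε / (ω + ε) * xe)
    (l3 l4 : ℝ)
    (hl3 : l3 = (-2 * α - (ω ^ 2 + 2 * ε ^ 2) / (ω + ε)
        + Real.sqrt ((2 * α - ω - 3 * ω * ε / (ω + ε)) ^ 2 + 4 * ε ^ 2)) / 2)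
    (hl4 : l4 = (-2 * α - (ω ^ 2 + 2 * ε ^ 2) / (ω + ε)
        - Real.sqrt ((2 * α - ω - 3 * ω * ε / (ω + ε)) ^ 2 + 4 * ε ^ 2)) / 2) :
    (Jac α β ω ε xe).charpoly = (X ^ 2 - C l3) * (X ^ 2 - C l4) ∧
    (Jac α β ω ε (-xe)).charpoly = (X ^ 2 - C l3) * (X ^ 2 - C l4) :=
  charpoly_at_nontrivial_equilibria_general α β ω ε hω hε hβ h xe hxe l3 l4 hl3 hl4
end

section
/- Assume ω > 0 and ε ≥ 0, and let λ₃ = (−2α − (ω² + 2ε²)/(ω+ε) + √((2α − ω − 3ωε/(ω+ε))² + 4ε²))/2 and λ₄ = (−2α − (ω² + 2ε²)/(ω+ε) − √((2α − ω − 3ωε/(ω+ε))² + 4ε²))/2. Then λ₃·λ₄ = 2(α(ω+ε) − ωε), and λ₄ < 0 for every α ∈ ℝ. Consequently, if α(ω+ε) > ωε then λ₃ < 0 (so the nontrivial equilibria are centre-centre), while if α(ω+ε) < ωε then λ₃ > 0 (so the nontrivial equilibria are saddle-centre). -/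
/-!
Write `λ₃, λ₄ = (-A ± √D) / 2` with `A = 2α + (ω² + 2ε²)/(ω + ε)`, `B = 2α - ω - 3ωε/(ω + ε)` and
`D = B² + 4ε²`. Vieta gives `λ₃ λ₄ = (A² - D) / 4`, which
simplifies to `2 (α (ω + ε) - ω ε)`. Since `A - B = 2 (ω + ε) > 0` and `√D ≥ |B|`, we get
`A + √D > 0`, so `λ₄ < 0`, and the sign of `λ₃` is the opposite of the sign of the product.
-/

theorem neg_add_sqrt_div_two_mul_neg_sub_sqrt_div_two {D : ℝ} (A : ℝ) (hD : 0 ≤ D) :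
    (-A + √D) / 2 * ((-A - √D) / 2) = (A ^ 2 - D) / 4 := by
  linear_combination (-1 / 4 : ℝ) * Real.sq_sqrt hD

theorem neg_sub_sqrt_neg_of_sq_le {A B D : ℝ} (hBD : B ^ 2 ≤ D) (hBA : B < A) :
    -A - √D < 0 := by
  linarith [Real.abs_le_sqrt hBD, neg_abs_le B]

section EquilibriumCoefficients

variable {ω ε : ℝ} (α : ℝ) (hc : ω + ε ≠ 0)
include hc

theorem sub_coefficients_eq :
    (2 * α + (ω ^ 2 + 2 * ε ^ 2) / (ω + ε)) - (2 * α - ω - 3 * ω * ε / (ω + ε))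
      = 2 * (ω + ε) := by
  field_simp
  ring

theorem sq_sub_discriminant_eq :
    (2 * α + (ω ^ 2 + 2 * ε ^ 2) / (ω + ε)) ^ 2
        - ((2 * α - ω - 3 * ω * ε / (ω + ε)) ^ 2 + 4 * ε ^ 2)
      = 8 * (α * (ω + ε) - ω * ε) := by
  field_simp
  ring

end EquilibriumCoefficients

theorem lambda3_lambda4_signs (ω ε : ℝ) (hω : 0 < ω) (hε : 0 ≤ ε) (α : ℝ)
    (l3 l4 : ℝ)
    (hl3 : l3 = (-2 * α - (ω ^ 2 + 2 * ε ^ 2) / (ω + ε)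
        + Real.sqrt ((2 * α - ω - 3 * ω * ε / (ω + ε)) ^ 2 + 4 * ε ^ 2)) / 2)
    (hl4 : l4 = (-2 * α - (ω ^ 2 + 2 * ε ^ 2) / (ω + ε)
        - Real.sqrt ((2 * α - ω - 3 * ω * ε / (ω + ε)) ^ 2 + 4 * ε ^ 2)) / 2) :
    l3 * l4 = 2 * (α * (ω + ε) - ω * ε) ∧
    l4 < 0 ∧
    (ω * ε < α * (ω + ε) → l3 < 0) ∧
    (α * (ω + ε) < ω * ε → 0 < l3) := by
  have hc : 0 < ω + ε := add_pos_of_pos_of_nonneg hω hε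
  set A := 2 * α + (ω ^ 2 + 2 * ε ^ 2) / (ω + ε)
  set B := 2 * α - ω - 3 * ω * ε / (ω + ε)
  set D := B ^ 2 + 4 * ε ^ 2
  have hBD : B ^ 2 ≤ D := le_add_of_nonneg_right (by positivity)
  have hl3' : l3 = (-A + √D) / 2 := by rw [hl3]; ring
  have hl4' : l4 = (-A - √D) / 2 := by rw [hl4]; ring
  have hprod : l3 * l4 = 2 * (α * (ω + ε) - ω * ε) := by
    rw [hl3', hl4', neg_add_sqrt_div_two_mul_neg_sub_sqrt_div_two A ((sq_nonneg B).trans hBD),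
      sq_sub_discriminant_eq α hc.ne']
    ring
  have hl4_neg : l4 < 0 := by
    have hBA : B < A := by linarith [sub_coefficients_eq α hc.ne']
    rw [hl4']
    exact div_neg_of_neg_of_pos (neg_sub_sqrt_neg_of_sq_le hBD hBA) two_pos
  refine ⟨hprod, hl4_neg, fun h => ?_, fun h => ?_⟩
  · exact neg_of_mul_pos_left (by linarith) hl4_neg.le
  · exact pos_of_mul_neg_left (by linarith) hl4_neg.le
end
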